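/- In the scale family of random effects, if the standardized random effect v has excess kurtosis E[v⁴] − 3 > 0, then the map A ↦ E[H_A⁴] is strictly antitone (strictly decreasing) on (0, ∞); explicitly E[H_A⁴] = 3 + (D/(A+D))²·(E[v⁴] − 3) for every A > 0. -/

import Mathlib

open MeasureTheory ProbabilityTheory
open scoped NNReal
open Real Set

lemma gauss_int_aux {b : ℝ} (hb : 0 < b) (n : ℕ) :
    Integrable (fun x : ℝ => x ^ n * Real.exp (-b * x ^ 2)) := by
  have h := integrable_rpow_mul_exp_neg_mul_sq hb (s := (n : ℝ))
    (by exact lt_of_lt_of_le (by norm_num) (Nat.cast_nonneg n) : (-1 : ℝ) < n)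
  simpa [Real.rpow_natCast] using h

lemma gauss_even_int {b : ℝ} (hb : 0 < b) (n : ℕ) (hn : Even n) :
    ∫ x : ℝ, x ^ n * Real.exp (-b * x ^ 2)
      = b ^ (-((n : ℝ) + 1) / 2) * Real.Gamma (((n : ℝ) + 1) / 2) := by
  have h1 : ∫ x : ℝ, x ^ n * Real.exp (-b * x ^ 2)
      = ∫ x : ℝ, (fun t : ℝ => t ^ n * Real.exp (-b * t ^ 2)) |x| := by
    congr 1; funext x
    simp [hn.pow_abs, sq_abs]
  have h0 : ∫ x : ℝ, (fun t : ℝ => t ^ n * Real.exp (-b * t ^ 2)) |x|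
      = 2 * ∫ x in Ioi (0:ℝ), x ^ n * Real.exp (-b * x ^ 2) := integral_comp_abs (f := fun t : ℝ => t ^ n * Real.exp (-b * t ^ 2))
  rw [h1, h0]
  have h2 : ∫ x in Ioi (0:ℝ), x ^ n * Real.exp (-b * x ^ 2)
      = ∫ x in Ioi (0:ℝ), x ^ (n : ℝ) * Real.exp (-b * x ^ (2:ℝ)) := by
    refine setIntegral_congr_fun measurableSet_Ioi (fun x hx => ?_)
    rw [Real.rpow_natCast, show ((2:ℝ)) = ((2:ℕ):ℝ) by norm_num, Real.rpow_natCast]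
  rw [h2, integral_rpow_mul_exp_neg_mul_rpow two_pos (lt_of_lt_of_le (by norm_num) (Nat.cast_nonneg n)) hb]
  ring

lemma gauss_moment_two {b : ℝ} (hb : 0 < b) :
    ∫ x : ℝ, x ^ 2 * Real.exp (-b * x ^ 2) = Real.sqrt π / 2 * b ^ (-(3:ℝ)/2) := by
  rw [gauss_even_int hb 2 ⟨1, by norm_num⟩]
  have : Real.Gamma ((((2:ℕ):ℝ) + 1) / 2) = Real.sqrt π / 2 := by
    rw [show (((2:ℕ):ℝ) + 1) / 2 = 1/2 + 1 by norm_num,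
      Real.Gamma_add_one (by norm_num), Real.Gamma_one_half_eq]
    ring
  rw [this]
  norm_num
  ring

lemma gauss_moment_four {b : ℝ} (hb : 0 < b) :
    ∫ x : ℝ, x ^ 4 * Real.exp (-b * x ^ 2) = 3 * Real.sqrt π / 4 * b ^ (-(5:ℝ)/2) := by
  rw [gauss_even_int hb 4 ⟨2, by norm_num⟩]
  have : Real.Gamma ((((4:ℕ):ℝ) + 1) / 2) = 3 * Real.sqrt π / 4 := by
    rw [show (((4:ℕ):ℝ) + 1) / 2 = 3/2 + 1 by norm_num,
      Real.Gamma_add_one (by norm_num),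
      show (3:ℝ)/2 = 1/2 + 1 by norm_num,
      Real.Gamma_add_one (by norm_num), Real.Gamma_one_half_eq]
    ring
  rw [this]
  norm_num
  ring

lemma integral_gaussianReal_eq {D : ℝ≥0} (hD : D ≠ 0) (g : ℝ → ℝ) :
    ∫ x, g x ∂(gaussianReal 0 D) = ∫ x, gaussianPDFReal 0 D x * g x := by
  rw [gaussianReal_of_var_ne_zero _ hD]
  have hmeq : (gaussianPDF 0 D) = fun x => ((gaussianPDFReal 0 D x).toNNReal : ENNReal) := rfl
  rw [hmeq, integral_withDensity_eq_integral_smul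
    ((measurable_gaussianPDFReal 0 D).real_toNNReal) g]
  congr 1; funext x
  simp [NNReal.smul_def, Real.coe_toNNReal _ (gaussianPDFReal_nonneg 0 D x)]

lemma pdf_eq {D : ℝ≥0} (n : ℕ) (x : ℝ) :
    gaussianPDFReal 0 D x * x ^ n
      = (Real.sqrt (2 * π * D))⁻¹ * (x ^ n * Real.exp (-((2:ℝ) * D)⁻¹ * x ^ 2)) := by
  simp only [gaussianPDFReal_def]
  rw [show -(x - 0) ^ 2 / (2 * (D:ℝ)) = -((2:ℝ) * D)⁻¹ * x ^ 2 by rw [sub_zero]; ring]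
  ring

lemma gaussianReal_int_pow {D : ℝ≥0} (hD : 0 < D) (n : ℕ) :
    Integrable (fun x => x ^ n) (gaussianReal 0 D) := by
  have hD' : (0:ℝ) < D := hD
  have hb : (0:ℝ) < ((2:ℝ) * D)⁻¹ := by positivity
  rw [gaussianReal_of_var_ne_zero _ hD.ne',
    integrable_withDensity_iff (measurable_gaussianPDF _ _)
      (ae_of_all _ fun x => ENNReal.ofReal_lt_top)]
  refine (((gauss_int_aux hb n).const_mul ((Real.sqrt (2 * π * D))⁻¹)).congr
    (ae_of_all _ fun x => ?_))
  rw [gaussianPDF_def]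
  simp only
  rw [ENNReal.toReal_ofReal (gaussianPDFReal_nonneg 0 D x), mul_comm (x ^ n) (gaussianPDFReal 0 D x),
    pdf_eq n x]

lemma sqrt_2piD {D : ℝ≥0} (hD : (0:ℝ) < D) :
    Real.sqrt (2 * π * D) = Real.sqrt π * (2 * (D:ℝ)) ^ ((1:ℝ)/2) := by
  rw [show 2 * π * (D:ℝ) = π * (2 * D) by ring, Real.sqrt_mul Real.pi_pos.le,
    Real.sqrt_eq_rpow]
  rw [Real.sqrt_eq_rpow]

lemma inv_rpow_neg {t : ℝ} (ht : 0 < t) (y : ℝ) : (t⁻¹) ^ (-y) = t ^ y := by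
  rw [Real.inv_rpow ht.le, Real.rpow_neg ht.le, inv_inv]

lemma gaussianReal_sq {D : ℝ≥0} (hD : 0 < D) :
    ∫ x, x ^ 2 ∂(gaussianReal 0 D) = D := by
  have hD' : (0:ℝ) < D := hD
  have ht : (0:ℝ) < 2 * D := by positivity
  have hb : (0:ℝ) < ((2:ℝ) * D)⁻¹ := by positivity
  rw [integral_gaussianReal_eq hD.ne']
  simp_rw [pdf_eq 2]
  rw [integral_const_mul _ _, gauss_moment_two hb]
  rw [show (-(3:ℝ)/2) = -((3:ℝ)/2) by norm_num, inv_rpow_neg ht,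
    show (3:ℝ)/2 = 1 + 1/2 by norm_num, Real.rpow_add ht, Real.rpow_one, sqrt_2piD hD']
  have h1 : Real.sqrt π ≠ 0 := (Real.sqrt_pos.2 Real.pi_pos).ne'
  have h2 : (2 * (D:ℝ)) ^ ((1:ℝ)/2) ≠ 0 := (Real.rpow_pos_of_pos ht _).ne'
  field_simp

lemma gaussianReal_fourth {D : ℝ≥0} (hD : 0 < D) :
    ∫ x, x ^ 4 ∂(gaussianReal 0 D) = 3 * (D:ℝ) ^ 2 := by
  have hD' : (0:ℝ) < D := hD
  have ht : (0:ℝ) < 2 * D := by positivity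
  have hb : (0:ℝ) < ((2:ℝ) * D)⁻¹ := by positivity
  rw [integral_gaussianReal_eq hD.ne']
  simp_rw [pdf_eq 4]
  rw [integral_const_mul _ _, gauss_moment_four hb]
  rw [show (-(5:ℝ)/2) = -((5:ℝ)/2) by norm_num, inv_rpow_neg ht,
    show (5:ℝ)/2 = 2 + 1/2 by norm_num, Real.rpow_add ht, sqrt_2piD hD',
    show ((2:ℝ)) = ((2:ℕ):ℝ) by norm_num, Real.rpow_natCast]
  have h1 : Real.sqrt π ≠ 0 := (Real.sqrt_pos.2 Real.pi_pos).ne'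
  have h2 : (2 * (D:ℝ)) ^ ((1:ℝ)/2) ≠ 0 := (Real.rpow_pos_of_pos ht _).ne'
  field_simp
  ring

lemma gaussianReal_odd {D : ℝ≥0} {n : ℕ} (hn : Odd n) :
    ∫ x, x ^ n ∂(gaussianReal 0 D) = 0 := by
  set μ := gaussianReal 0 D with hμ
  have hmap : Measure.map (fun x : ℝ => -x) μ = μ := by
    have h := gaussianReal_map_const_mul (μ := 0) (v := D) (-1)
    have h2 : (fun x : ℝ => -x) = fun x : ℝ => (-1 : ℝ) * x := by funext x; ring
    rw [h2]
    rw [hμ, h]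
    congr 1
    · norm_num
    · ext; simp
  have hsm : AEStronglyMeasurable (fun x : ℝ => x ^ n) μ :=
    (measurable_id.pow_const n).aestronglyMeasurable
  have key : ∫ x, x ^ n ∂μ = ∫ x, (-x) ^ n ∂μ := by
    conv_lhs => rw [← hmap]
    rw [integral_map measurable_neg.aemeasurable (hmap.symm ▸ hsm)]
  simp_rw [hn.neg_pow] at key
  rw [integral_neg] at key
  linarith

/-- In the scale family of random effects, if the standardized random effect `v` has
positive excess kurtosis `E[v⁴] − 3 > 0`, then `A ↦ E[H_A⁴]` is strictly antitone on
`(0, ∞)`; explicitly `E[H_A⁴] = 3 + (D/(A+D))²·(E[v⁴] − 3)` for every `A > 0`. -/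
theorem fourth_moment_strictAntiOn
    {Ω : Type*} [MeasureSpace Ω] [IsProbabilityMeasure (ℙ : Measure Ω)]
    (v e : Ω → ℝ) (D : ℝ≥0) (hD : 0 < D)
    (hv_meas : Measurable v) (he_meas : Measurable e)
    (hv_symm : Measure.map v ℙ = Measure.map (fun ω => -v ω) ℙ)
    (hv_var : (∫ ω, (v ω) ^ 2) = 1)
    (hv4_int : Integrable (fun ω => (v ω) ^ 4))
    (hv4_gt : 3 < ∫ ω, (v ω) ^ 4)
    (he_law : Measure.map e ℙ = gaussianReal 0 D)
    (h_indep : IndepFun v e)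
    (H : ℝ → Ω → ℝ)
    (hH : H = fun A ω =>
      ((D : ℝ) / (A + (D : ℝ)) * Real.sqrt A * v ω
          - (1 - (D : ℝ) / (A + (D : ℝ))) * e ω) / Real.sqrt (A * (D : ℝ) / (A + (D : ℝ)))) :
    StrictAntiOn (fun A => ∫ ω, (H A ω) ^ 4) (Set.Ioi (0 : ℝ)) ∧
      ∀ A : ℝ, 0 < A →
        (∫ ω, (H A ω) ^ 4) = 3 + ((D : ℝ) / (A + (D : ℝ))) ^ 2 * ((∫ ω, (v ω) ^ 4) - 3) := by
  have hDpos : (0:ℝ) < D := hD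
  -- integrability of powers of v
  have hv_int : ∀ k : ℕ, k ≤ 4 → Integrable (fun ω => v ω ^ k) := by
    intro k hk
    refine ((integrable_const (1:ℝ)).add hv4_int).mono
      ((hv_meas.pow_const k).aestronglyMeasurable) (ae_of_all _ fun ω => ?_)
    have hx4 : (0:ℝ) ≤ v ω ^ 4 := by positivity
    simp only [Pi.add_apply, Real.norm_eq_abs]
    rw [abs_of_nonneg (by positivity : (0:ℝ) ≤ 1 + v ω ^ 4), abs_pow]
    rcases le_total |v ω| 1 with h | h
    · have h1 : |v ω| ^ k ≤ 1 := pow_le_one₀ (abs_nonneg _) h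
      linarith
    · have h2 : |v ω| ^ k ≤ |v ω| ^ 4 := pow_le_pow_right₀ h hk
      have h3 : |v ω| ^ 4 = v ω ^ 4 := by rw [← abs_pow, abs_of_nonneg hx4]
      linarith
  -- integrability of powers of e
  have he_int : ∀ n : ℕ, Integrable (fun ω => e ω ^ n) := by
    intro n
    have h := gaussianReal_int_pow hD n
    rw [← he_law] at h
    exact (integrable_map_measure (measurable_id.pow_const n).aestronglyMeasurable
      he_meas.aemeasurable).mp h
  -- moments of e
  have he_mom : ∀ n : ℕ, ∫ ω, e ω ^ n = ∫ x, x ^ n ∂(gaussianReal 0 D) := fun n => by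
    have hsm : AEStronglyMeasurable (fun x : ℝ => x ^ n) (Measure.map e ℙ) :=
      (measurable_id.pow_const n).aestronglyMeasurable
    rw [← he_law, integral_map he_meas.aemeasurable hsm]
  have he1 : ∫ ω, e ω ^ 1 = 0 := by rw [he_mom 1, gaussianReal_odd odd_one]
  have he3 : ∫ ω, e ω ^ 3 = 0 := by rw [he_mom 3, gaussianReal_odd (⟨1, by norm_num⟩ : Odd 3)]
  have he2 : ∫ ω, e ω ^ 2 = (D:ℝ) := by rw [he_mom 2, gaussianReal_sq hD]
  have he4 : ∫ ω, e ω ^ 4 = 3 * (D:ℝ) ^ 2 := by rw [he_mom 4, gaussianReal_fourth hD]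
  -- odd moments of v vanish
  have hv_odd : ∀ k : ℕ, Odd k → ∫ ω, v ω ^ k = 0 := by
    intro k hk
    have hsm1 : AEStronglyMeasurable (fun x : ℝ => x ^ k) (Measure.map v ℙ) :=
      (measurable_id.pow_const k).aestronglyMeasurable
    have hsm2 : AEStronglyMeasurable (fun x : ℝ => x ^ k) (Measure.map (fun ω => -v ω) ℙ) :=
      (measurable_id.pow_const k).aestronglyMeasurable
    have h1 : ∫ ω, v ω ^ k = ∫ x, x ^ k ∂(Measure.map v ℙ) :=
      (integral_map hv_meas.aemeasurable hsm1).symm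
    have h2 : ∫ x, x ^ k ∂(Measure.map (fun ω => -v ω) ℙ) = ∫ ω, (-v ω) ^ k :=
      integral_map hv_meas.neg.aemeasurable hsm2
    have key : ∫ ω, v ω ^ k = ∫ ω, (-v ω) ^ k := by rw [h1, hv_symm, h2]
    have key2 : ∫ ω, (-v ω) ^ k = - ∫ ω, v ω ^ k := by
      simp_rw [hk.neg_pow]
      exact integral_neg _
    linarith [key.trans key2]
  have hv1 : ∫ ω, v ω ^ 1 = 0 := hv_odd 1 odd_one
  have hv3 : ∫ ω, v ω ^ 3 = 0 := hv_odd 3 ⟨1, by norm_num⟩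
  -- independence of powers
  have hind : ∀ i j : ℕ, IndepFun (fun ω => v ω ^ i) (fun ω => e ω ^ j) ℙ := fun i j =>
    h_indep.comp (measurable_id.pow_const i) (measurable_id.pow_const j)
  have hprod_int : ∀ i j : ℕ, i ≤ 4 → Integrable (fun ω => v ω ^ i * e ω ^ j) := fun i j hi =>
    (hind i j).integrable_mul (hv_int i hi) (he_int j)
  have hprod : ∀ i j : ℕ, ∫ ω, v ω ^ i * e ω ^ j = (∫ ω, v ω ^ i) * ∫ ω, e ω ^ j := fun i j =>
    (hind i j).integral_mul_eq_mul_integral ((hv_meas.pow_const i).aestronglyMeasurable)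
      ((he_meas.pow_const j).aestronglyMeasurable)
  -- the explicit formula
  have hform : ∀ A : ℝ, 0 < A →
      (∫ ω, (H A ω) ^ 4) = 3 + ((D : ℝ) / (A + (D : ℝ))) ^ 2 * ((∫ ω, (v ω) ^ 4) - 3) := by
    intro A hA
    have hADpos : (0:ℝ) < A + D := by positivity
    have hg : (0:ℝ) < A * D / (A + D) := by positivity
    have hsg : Real.sqrt (A * (D:ℝ) / (A + D)) ^ 2 = A * D / (A + D) := Real.sq_sqrt hg.le
    have hsA : Real.sqrt A ^ 2 = A := Real.sq_sqrt hA.le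
    have hpt : ∀ ω, H A ω ^ 4 =
        ((A * (D:ℝ) / (A + D)) ^ 2)⁻¹ *
          ( ((D:ℝ)/(A+D))^4 * Real.sqrt A ^ 4 * (v ω ^ 4)
            - 4 * ((D:ℝ)/(A+D))^3 * Real.sqrt A ^ 3 * (1 - (D:ℝ)/(A+D)) * (v ω ^ 3 * e ω ^ 1)
            + 6 * ((D:ℝ)/(A+D))^2 * Real.sqrt A ^ 2 * (1 - (D:ℝ)/(A+D))^2 * (v ω ^ 2 * e ω ^ 2)
            - 4 * ((D:ℝ)/(A+D)) * Real.sqrt A * (1 - (D:ℝ)/(A+D))^3 * (v ω ^ 1 * e ω ^ 3)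
            + (1 - (D:ℝ)/(A+D))^4 * (e ω ^ 4) ) := by
      intro ω
      rw [hH]
      simp only
      rw [div_pow, show Real.sqrt (A * (D:ℝ)/(A+D)) ^ 4 = (A * (D:ℝ)/(A+D)) ^ 2 by
        rw [show (4:ℕ) = 2*2 from rfl, pow_mul, hsg]]
      rw [div_eq_mul_inv, mul_comm]
      congr 1
      ring
    have J1 : Integrable (fun ω =>
        ((D:ℝ)/(A+D))^4 * Real.sqrt A ^ 4 * (v ω ^ 4)) := hv4_int.const_mul _
    have J2 : Integrable (fun ω =>
        4 * ((D:ℝ)/(A+D))^3 * Real.sqrt A ^ 3 * (1 - (D:ℝ)/(A+D)) * (v ω ^ 3 * e ω ^ 1)) :=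
      (hprod_int 3 1 (by norm_num)).const_mul _
    have J3 : Integrable (fun ω =>
        6 * ((D:ℝ)/(A+D))^2 * Real.sqrt A ^ 2 * (1 - (D:ℝ)/(A+D))^2 * (v ω ^ 2 * e ω ^ 2)) :=
      (hprod_int 2 2 (by norm_num)).const_mul _
    have J4 : Integrable (fun ω =>
        4 * ((D:ℝ)/(A+D)) * Real.sqrt A * (1 - (D:ℝ)/(A+D))^3 * (v ω ^ 1 * e ω ^ 3)) :=
      (hprod_int 1 3 (by norm_num)).const_mul _
    have J5 : Integrable (fun ω =>
        (1 - (D:ℝ)/(A+D))^4 * (e ω ^ 4)) := (he_int 4).const_mul _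
    rw [show (∫ ω, (H A ω) ^ 4) = ∫ ω,
        ((A * (D:ℝ) / (A + D)) ^ 2)⁻¹ *
          ( ((D:ℝ)/(A+D))^4 * Real.sqrt A ^ 4 * (v ω ^ 4)
            - 4 * ((D:ℝ)/(A+D))^3 * Real.sqrt A ^ 3 * (1 - (D:ℝ)/(A+D)) * (v ω ^ 3 * e ω ^ 1)
            + 6 * ((D:ℝ)/(A+D))^2 * Real.sqrt A ^ 2 * (1 - (D:ℝ)/(A+D))^2 * (v ω ^ 2 * e ω ^ 2)
            - 4 * ((D:ℝ)/(A+D)) * Real.sqrt A * (1 - (D:ℝ)/(A+D))^3 * (v ω ^ 1 * e ω ^ 3)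
            + (1 - (D:ℝ)/(A+D))^4 * (e ω ^ 4) )
      from integral_congr_ae (ae_of_all _ hpt)]
    have K2 : Integrable (fun ω =>
        ((D:ℝ)/(A+D))^4 * Real.sqrt A ^ 4 * (v ω ^ 4)
          - 4 * ((D:ℝ)/(A+D))^3 * Real.sqrt A ^ 3 * (1 - (D:ℝ)/(A+D)) * (v ω ^ 3 * e ω ^ 1)) :=
      J1.sub J2
    have K3 : Integrable (fun ω =>
        ((D:ℝ)/(A+D))^4 * Real.sqrt A ^ 4 * (v ω ^ 4)
          - 4 * ((D:ℝ)/(A+D))^3 * Real.sqrt A ^ 3 * (1 - (D:ℝ)/(A+D)) * (v ω ^ 3 * e ω ^ 1)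
          + 6 * ((D:ℝ)/(A+D))^2 * Real.sqrt A ^ 2 * (1 - (D:ℝ)/(A+D))^2 * (v ω ^ 2 * e ω ^ 2)) :=
      K2.add J3
    have K4 : Integrable (fun ω =>
        ((D:ℝ)/(A+D))^4 * Real.sqrt A ^ 4 * (v ω ^ 4)
          - 4 * ((D:ℝ)/(A+D))^3 * Real.sqrt A ^ 3 * (1 - (D:ℝ)/(A+D)) * (v ω ^ 3 * e ω ^ 1)
          + 6 * ((D:ℝ)/(A+D))^2 * Real.sqrt A ^ 2 * (1 - (D:ℝ)/(A+D))^2 * (v ω ^ 2 * e ω ^ 2)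
          - 4 * ((D:ℝ)/(A+D)) * Real.sqrt A * (1 - (D:ℝ)/(A+D))^3 * (v ω ^ 1 * e ω ^ 3)) :=
      K3.sub J4
    rw [integral_const_mul]
    rw [integral_add K4 J5, integral_sub K3 J4, integral_add K2 J3, integral_sub J1 J2,
      integral_const_mul, integral_const_mul, integral_const_mul, integral_const_mul,
      integral_const_mul]
    rw [hprod 3 1, hprod 2 2, hprod 1 3, hv1, hv3, hv_var, he1, he2, he3, he4]
    have hd : (D:ℝ) ≠ 0 := hDpos.ne'
    have hA0 : A ≠ 0 := hA.ne'
    have hAD0 : A + (D:ℝ) ≠ 0 := hADpos.ne'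
    have h4 : Real.sqrt A ^ 4 = A ^ 2 := by
      rw [show (4:ℕ) = 2*2 from rfl, pow_mul, hsA]
    rw [h4, hsA]
    field_simp
    ring
  refine ⟨?_, hform⟩
  intro A1 h1 A2 h2 hlt
  simp only
  rw [hform A1 (Set.mem_Ioi.mp h1), hform A2 (Set.mem_Ioi.mp h2)]
  have hK : 0 < (∫ ω, v ω ^ 4) - 3 := by linarith
  have hA1 : (0:ℝ) < A1 := Set.mem_Ioi.mp h1
  have hA2 : (0:ℝ) < A2 := Set.mem_Ioi.mp h2
  have hb2 : (D:ℝ)/(A2+D) < (D:ℝ)/(A1+D) :=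
    div_lt_div_of_pos_left hDpos (by linarith) (by linarith)
  have hnn : 0 ≤ (D:ℝ)/(A2+D) := by positivity
  have hsq : ((D:ℝ)/(A2+D))^2 < ((D:ℝ)/(A1+D))^2 :=
    pow_lt_pow_left₀ hb2 hnn two_ne_zero
  nlinarith [hK, hsq]
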